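/- arXiv:2006.12851 — 2 statements merged into one kernel-verified Lean document; each statement's English description precedes it below -/
import Mathlib

section
/- Let a, m > 0 and c > 2√a, set λ = (c − √(c² − 4a))/2, φ(x) = 1 + e^{−λx}/(1+a), θ₁(x) = (c − √(c² − 4a·φ(x)^{−m}))/(2·φ(x)^{−m}) and K₂ = 4a²mλ / ((c + √(c² − 4a))²·√(c² − 4a)·(1+a)). Then there exists x₀ ∈ ℝ such that for all x > x₀: 0 < θ₁'(x) ≤ 2K₂·e^{−λx} and −2λK₂·e^{−λx} ≤ θ₁''(x) < 0. -/
/-!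
Put `t = e^{-λx}`. Rationalising the smaller root gives `θ₁(x) = F(t)` with
`F(t) = 2a / (c + √(c² - 4a (1 + t/(1+a))^{-m}))`, which is smooth near every `t ≥ 0`.
The chain rule gives `θ₁' = -λ t F'(t)` and `θ₁'' = λ² t (F'(t) + t F''(t))`, so as `x → ∞`
the ratios `θ₁'/e^{-λx}` and `θ₁''/e^{-λx}` tend to `-λ F'(0) = K₂ > 0` and `λ² F'(0) = -λ K₂`;
all four bounds hold once both ratios are within a factor two of their limits.
-/

open Real Filter Topology

lemma eventually_pos_and_le_two_mul_of_tendsto_div {α : Type*} {l : Filter α} {g E : α → ℝ}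
    {L : ℝ} (hE : ∀ x, 0 < E x) (h : Tendsto (fun x => g x / E x) l (𝓝 L)) (hL : 0 < L) :
    ∀ᶠ x in l, 0 < g x ∧ g x ≤ 2 * L * E x := by
  filter_upwards [h.eventually (eventually_gt_nhds hL),
    h.eventually (eventually_lt_nhds (by linarith : L < 2 * L))] with x hpos hlt
  rw [lt_div_iff₀ (hE x)] at hpos
  rw [div_lt_iff₀ (hE x)] at hlt
  constructor <;> linarith

section ExpReparam

variable {f : ℝ → ℝ} {lam : ℝ}

lemma tendsto_exp_neg_mul_atTop_nhdsGT (hlam : 0 < lam) :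
    Tendsto (fun x => exp (-lam * x)) atTop (𝓝[>] 0) :=
  tendsto_exp_atBot_nhdsGT.comp (tendsto_id.const_mul_atTop_of_neg (neg_neg_of_pos hlam))

lemma hasDerivAt_exp_neg_mul (x : ℝ) :
    HasDerivAt (fun y => exp (-lam * y)) (-lam * exp (-lam * x)) x := by
  simpa [mul_comm] using ((hasDerivAt_id x).const_mul (-lam)).exp

lemma hasDerivAt_comp_exp_neg_mul {x : ℝ} (hf : DifferentiableAt ℝ f (exp (-lam * x))) :
    HasDerivAt (fun y => f (exp (-lam * y)))
      (-lam * exp (-lam * x) * deriv f (exp (-lam * x))) x :=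
  (hf.hasDerivAt.comp x (hasDerivAt_exp_neg_mul x)).congr_deriv (by ring)

lemma deriv_comp_exp_neg_mul (hf : ∀ t, 0 < t → DifferentiableAt ℝ f t) :
    deriv (fun y => f (exp (-lam * y))) =
      fun x => -lam * exp (-lam * x) * deriv f (exp (-lam * x)) :=
  funext fun _ => (hasDerivAt_comp_exp_neg_mul (hf _ (exp_pos _))).deriv

lemma deriv_deriv_comp_exp_neg_mul (hf : ∀ t, 0 < t → DifferentiableAt ℝ f t)
    (hf' : ∀ t, 0 < t → DifferentiableAt ℝ (deriv f) t) (x : ℝ) :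
    deriv (deriv (fun y => f (exp (-lam * y)))) x = lam ^ 2 * exp (-lam * x) *
      (deriv f (exp (-lam * x)) + exp (-lam * x) * deriv (deriv f) (exp (-lam * x))) := by
  rw [deriv_comp_exp_neg_mul hf]
  have hprod := ((hasDerivAt_exp_neg_mul (lam := lam) x).const_mul (-lam)).mul
    (hasDerivAt_comp_exp_neg_mul (lam := lam) (hf' _ (exp_pos _)))
  exact hprod.deriv.trans (by ring)

lemma tendsto_deriv_comp_exp_neg_mul_div (hlam : 0 < lam)
    (hf : ∀ t, 0 ≤ t → ContDiffAt ℝ 2 f t) :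
    Tendsto (fun x => deriv (fun y => f (exp (-lam * y))) x / exp (-lam * x)) atTop
      (𝓝 (-lam * deriv f 0)) := by
  have hE := (tendsto_exp_neg_mul_atTop_nhdsGT hlam).mono_right nhdsWithin_le_nhds
  have hf' : ContinuousAt (deriv f) 0 :=
    ((hf 0 le_rfl).derivWithin (m := 1) (by norm_num)).continuousAt
  rw [deriv_comp_exp_neg_mul fun t ht => (hf t ht.le).differentiableAt (by norm_num)]
  refine ((hf'.tendsto.comp hE).const_mul (-lam)).congr fun x => ?_
  field_simp [(exp_pos (-lam * x)).ne']
  rfl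

lemma tendsto_deriv_deriv_comp_exp_neg_mul_div (hlam : 0 < lam)
    (hf : ∀ t, 0 ≤ t → ContDiffAt ℝ 2 f t) :
    Tendsto (fun x => deriv (deriv (fun y => f (exp (-lam * y)))) x / exp (-lam * x)) atTop
      (𝓝 (lam ^ 2 * deriv f 0)) := by
  have hE := (tendsto_exp_neg_mul_atTop_nhdsGT hlam).mono_right nhdsWithin_le_nhds
  have hf' : ∀ t, 0 ≤ t → ContDiffAt ℝ 1 (deriv f) t :=
    fun t ht => (hf t ht).derivWithin (by norm_num)
  have hf'' : ContinuousAt (deriv (deriv f)) 0 :=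
    ((hf' 0 le_rfl).derivWithin (m := 0) (by norm_num)).continuousAt
  have hlim : Tendsto (fun x => lam ^ 2 * (deriv f (exp (-lam * x)) +
      exp (-lam * x) * deriv (deriv f) (exp (-lam * x)))) atTop
      (𝓝 (lam ^ 2 * (deriv f 0 + 0 * deriv (deriv f) 0))) :=
    ((((hf' 0 le_rfl).continuousAt.tendsto.comp hE).add
      (hE.mul (hf''.tendsto.comp hE))).const_mul _)
  rw [zero_mul, add_zero] at hlim
  refine hlim.congr fun x => ?_
  rw [deriv_deriv_comp_exp_neg_mul (fun t ht => (hf t ht.le).differentiableAt (by norm_num))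
    (fun t ht => (hf' t ht.le).differentiableAt (by norm_num))]
  field_simp [(exp_pos (-lam * x)).ne']

theorem eventually_deriv_comp_exp_neg_mul_bounds (hlam : 0 < lam)
    (hf : ∀ t, 0 ≤ t → ContDiffAt ℝ 2 f t) {K : ℝ} (hK : 0 < K) (hfK : -lam * deriv f 0 = K) :
    ∀ᶠ x in atTop,
      (0 < deriv (fun y => f (exp (-lam * y))) x ∧
        deriv (fun y => f (exp (-lam * y))) x ≤ 2 * K * exp (-lam * x)) ∧
      (-(2 * lam * K) * exp (-lam * x) ≤ deriv (deriv (fun y => f (exp (-lam * y)))) x ∧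
        deriv (deriv (fun y => f (exp (-lam * y)))) x < 0) := by
  set θ := fun y => f (exp (-lam * y))
  have h1 : Tendsto (fun x => deriv θ x / exp (-lam * x)) atTop (𝓝 K) :=
    hfK ▸ tendsto_deriv_comp_exp_neg_mul_div hlam hf
  have h2 : Tendsto (fun x => -deriv (deriv θ) x / exp (-lam * x)) atTop (𝓝 (lam * K)) := by
    rw [show lam * K = -(lam ^ 2 * deriv f 0) by rw [← hfK]; ring]
    simpa only [neg_div] using (tendsto_deriv_deriv_comp_exp_neg_mul_div hlam hf).neg
  filter_upwards [eventually_pos_and_le_two_mul_of_tendsto_div (fun _ => exp_pos _) h1 hK,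
    eventually_pos_and_le_two_mul_of_tendsto_div (fun _ => exp_pos _) h2 (mul_pos hlam hK)]
    with x hd hdd
  constructor
  · exact hd
  · constructor <;> linarith

end ExpReparam

lemma sub_sqrt_div_eq_div_add_sqrt {a c w : ℝ} (hc : 0 < c) (hw : w ≠ 0)
    (h : 4 * a * w ≤ c ^ 2) :
    (c - √(c ^ 2 - 4 * a * w)) / (2 * w) = 2 * a / (c + √(c ^ 2 - 4 * a * w)) := by
  have hs := sq_sqrt (sub_nonneg.mpr h)
  have hpos : 0 < c + √(c ^ 2 - 4 * a * w) := by positivity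
  rw [div_eq_div_iff (by positivity) hpos.ne']
  linear_combination -hs

noncomputable def thetaProfile (a c m t : ℝ) : ℝ :=
  2 * a / (c + √(c ^ 2 - 4 * a * (1 + t / (1 + a)) ^ (-m)))

section thetaProfile

variable {a c m : ℝ}

lemma contDiffAt_thetaProfile {n : WithTop ℕ∞} {t : ℝ} (ha : 0 ≤ a) (hm : 0 ≤ m) (hc : 0 < c)
    (hca : 4 * a < c ^ 2) (ht : 0 ≤ t) : ContDiffAt ℝ n (thetaProfile a c m) t := by
  have hbase : 1 ≤ 1 + t / (1 + a) := le_add_of_nonneg_right (by positivity)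
  have hw : (1 + t / (1 + a)) ^ (-m) ≤ 1 := rpow_le_one_of_one_le_of_nonpos hbase (by linarith)
  have hrad : 0 < c ^ 2 - 4 * a * (1 + t / (1 + a)) ^ (-m) := by nlinarith
  unfold thetaProfile
  refine contDiffAt_const.div (contDiffAt_const.add (ContDiffAt.sqrt ?_ hrad.ne'))
    (by positivity)
  exact contDiffAt_const.sub (contDiffAt_const.mul
    ((contDiffAt_const.add (contDiffAt_id.div_const _)).rpow_const_of_ne (by positivity)))

lemma hasDerivAt_thetaProfile_zero (ha : 0 ≤ a) (hc : 0 < c) (hca : 4 * a < c ^ 2) :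
    HasDerivAt (thetaProfile a c m)
      (-(4 * a ^ 2 * m) / ((1 + a) * √(c ^ 2 - 4 * a) * (c + √(c ^ 2 - 4 * a)) ^ 2)) 0 := by
  have hb : 0 < √(c ^ 2 - 4 * a) := sqrt_pos.mpr (by linarith)
  have hw : HasDerivAt (fun t => (1 + t / (1 + a)) ^ (-m)) (-m / (1 + a)) 0 := by
    have h := (((hasDerivAt_id' (0 : ℝ)).div_const (1 + a)).const_add 1).rpow_const (p := -m)
      (Or.inl (by norm_num))
    norm_num at h
    exact h.congr_deriv (by ring)
  have hs := ((hw.const_mul (4 * a)).const_sub (c ^ 2)).sqrt (by simp; linarith)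
  have h := (hasDerivAt_const (0 : ℝ) (2 * a)).fun_div (hs.const_add c) (by simp; positivity)
  norm_num at h
  exact h.congr_deriv (by field_simp)

end thetaProfile

/-- derivative bounds on `θ₁` for supercritical speed `c > 2√a`. -/
theorem theta1_derivative_bounds_supercritical
    (a m c : ℝ) (ha : 0 < a) (hm : 0 < m) (hc : 2 * Real.sqrt a < c)
    (lam : ℝ) (hlam : lam = (c - Real.sqrt (c ^ 2 - 4 * a)) / 2)
    (φ θ₁ : ℝ → ℝ)
    (hφ : ∀ x, φ x = 1 + Real.exp (-lam * x) / (1 + a))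
    (hθ₁ : ∀ x, θ₁ x = (c - Real.sqrt (c ^ 2 - 4 * a * (φ x) ^ (-m)))
        / (2 * (φ x) ^ (-m)))
    (K₂ : ℝ) (hK₂ : K₂ = 4 * a ^ 2 * m * lam
        / ((c + Real.sqrt (c ^ 2 - 4 * a)) ^ 2 * Real.sqrt (c ^ 2 - 4 * a) * (1 + a))) :
    ∃ x₀ : ℝ, ∀ x > x₀,
      (0 < deriv θ₁ x ∧ deriv θ₁ x ≤ 2 * K₂ * Real.exp (-lam * x)) ∧
      (-(2 * lam * K₂) * Real.exp (-lam * x) ≤ deriv (deriv θ₁) x ∧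
        deriv (deriv θ₁) x < 0) := by
  have hc0 : 0 < c := (by positivity : 0 ≤ 2 * √a).trans_lt hc
  have hca : 4 * a < c ^ 2 := by nlinarith [sq_sqrt ha.le, sqrt_nonneg a]
  have hb0 : 0 < √(c ^ 2 - 4 * a) := sqrt_pos.mpr (by linarith)
  have hb : √(c ^ 2 - 4 * a) < c := by
    rw [sqrt_lt' hc0]; linarith
  have hlam0 : 0 < lam := by rw [hlam]; linarith
  have hθ : θ₁ = fun x => thetaProfile a c m (exp (-lam * x)) := by
    funext x
    have hφ1 : 1 < φ x := by rw [hφ]; exact lt_add_of_pos_right 1 (by positivity)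
    have hw : φ x ^ (-m) < 1 := rpow_lt_one_of_one_lt_of_neg hφ1 (neg_neg_of_pos hm)
    rw [hθ₁, sub_sqrt_div_eq_div_add_sqrt hc0 (rpow_pos_of_pos (one_pos.trans hφ1) _).ne'
      (by nlinarith), hφ, thetaProfile]
  have hK : -lam * deriv (thetaProfile a c m) 0 = K₂ := by
    rw [(hasDerivAt_thetaProfile_zero ha.le hc0 hca).deriv, hK₂]
    field_simp
  obtain ⟨x₀, hx₀⟩ := eventually_atTop.mp <| hθ ▸ eventually_deriv_comp_exp_neg_mul_bounds hlam0
    (fun t ht => contDiffAt_thetaProfile ha.le hm.le hc0 hca ht)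
    (hK₂ ▸ div_pos (by positivity) (by positivity)) hK
  exact ⟨x₀, fun x hx => hx₀ x hx.le⟩
end

section
/- Let a > 0, c ≥ 2√a, λ = (c − √(c² − 4a))/2, and let η > 0 be a real number. Let u : ℝ → ℝ be continuous with 0 ≤ u(x) ≤ min{e^{−λx}, η} for all x ∈ ℝ, and define V(x;u) = (λ₂ − λ₁)^{−1}·(∫_{−∞}^x e^{λ₁(x−s)} u(s) ds + ∫_x^{+∞} e^{λ₂(x−s)} u(s) ds). Then V(·;u) is differentiable with V'(x;u) = (λ₂ − λ₁)^{−1}·(∫_{−∞}^x λ₁ e^{λ₁(x−s)} u(s) ds + ∫_x^{+∞} λ₂ e^{λ₂(x−s)} u(s) ds), and |V'(x;u)| ≤ min{η/√(1+a), e^{−λx}/√(1+a)} for all x ∈ ℝ. -/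
/-!
Since `exp (k * (x - s)) = exp (k * x) * exp (-k * s)`, each half of `V` is `exp (k * x)` times an
integral of a continuous function up to, or from, the variable endpoint `x`; the product rule and
the fundamental theorem of calculus differentiate it, and the boundary terms `± u x` of the two
halves cancel. For the bound, `|u s| ≤ C * exp (-m * s)` makes the half-line integrals at most
`C * exp (-m * x) / |kᵢ + m|`, and `|λ₁| / |λ₁ + m| + λ₂ / (λ₂ + m) ≤ 2` as soon as
`λ₁ + λ₂ + 2 * m ≤ 0`. Since `λ₂ - λ₁ = √(c ^ 2 + 4) ≥ 2 * √(1 + a)`, the choices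
`(m, C) = (0, η)` and `(λ, 1)` give the two bounds.
-/

open Real Set MeasureTheory

section ExpKernel

variable {k m C x : ℝ} {f : ℝ → ℝ}

lemma norm_exp_mul_sub_mul_le (hfC : ∀ s, |f s| ≤ C * exp (-m * s)) (s : ℝ) :
    ‖exp (k * (x - s)) * f s‖ ≤ C * exp (-m * x) * exp ((k + m) * (x - s)) := by
  rw [norm_mul, norm_of_nonneg (exp_pos _).le, Real.norm_eq_abs]
  calc exp (k * (x - s)) * |f s| ≤ exp (k * (x - s)) * (C * exp (-m * s)) := by gcongr; exact hfC s
    _ = C * exp (-m * x) * exp ((k + m) * (x - s)) := by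
      rw [mul_left_comm, mul_assoc, ← exp_add, ← exp_add]; ring_nf

lemma integrable_exp_mul_sub_mul {μ : Measure ℝ} (hf : AEStronglyMeasurable f μ)
    (hfC : ∀ s, |f s| ≤ C * exp (-m * s)) (hint : Integrable (fun s => exp ((k + m) * (x - s))) μ) :
    Integrable (fun s => exp (k * (x - s)) * f s) μ :=
  (hint.const_mul _).mono' (by fun_prop) (ae_of_all _ (norm_exp_mul_sub_mul_le hfC))

lemma abs_integral_exp_mul_sub_mul_le {μ : Measure ℝ} (hfC : ∀ s, |f s| ≤ C * exp (-m * s))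
    (hint : Integrable (fun s => exp ((k + m) * (x - s))) μ) :
    |∫ s, exp (k * (x - s)) * f s ∂μ| ≤ C * exp (-m * x) * ∫ s, exp ((k + m) * (x - s)) ∂μ := by
  rw [← integral_const_mul]
  exact norm_integral_le_of_norm_le (hint.const_mul _) (ae_of_all _ (norm_exp_mul_sub_mul_le hfC))

lemma exp_mul_sub_eq (k x s : ℝ) : exp (k * (x - s)) = exp (k * x) * exp (-k * s) := by
  rw [← exp_add]; ring_nf

lemma integrableOn_exp_mul_sub_Iic (hk : k < 0) (x : ℝ) :
    IntegrableOn (fun s => exp (k * (x - s))) (Iic x) := by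
  simp_rw [exp_mul_sub_eq k x]
  exact (integrableOn_exp_mul_Iic (neg_pos.2 hk) x).const_mul _

lemma integral_exp_mul_sub_Iic (hk : k < 0) (x : ℝ) :
    ∫ s in Iic x, exp (k * (x - s)) = (-k)⁻¹ := by
  simp_rw [exp_mul_sub_eq k x]
  rw [integral_const_mul, integral_exp_mul_Iic (neg_pos.2 hk), mul_div_assoc', ← exp_add]
  simp

lemma integrableOn_exp_mul_sub_Ici (hk : 0 < k) (x : ℝ) :
    IntegrableOn (fun s => exp (k * (x - s))) (Ici x) := by
  simp_rw [exp_mul_sub_eq k x]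
  rw [integrableOn_Ici_iff_integrableOn_Ioi]
  exact (integrableOn_exp_mul_Ioi (neg_neg_of_pos hk) x).const_mul _

lemma integral_exp_mul_sub_Ici (hk : 0 < k) (x : ℝ) :
    ∫ s in Ici x, exp (k * (x - s)) = k⁻¹ := by
  simp_rw [exp_mul_sub_eq k x]
  rw [integral_Ici_eq_integral_Ioi, integral_const_mul, integral_exp_mul_Ioi (neg_neg_of_pos hk),
    neg_div_neg_eq, mul_div_assoc', ← exp_add]
  simp

lemma integral_exp_mul_sub_mul (μ : Measure ℝ) :
    ∫ s, exp (k * (x - s)) * f s ∂μ = exp (k * x) * ∫ s, exp (-k * s) * f s ∂μ := by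
  simp_rw [exp_mul_sub_eq k x, mul_assoc]
  exact integral_const_mul _ _

lemma integrableOn_exp_neg_mul_mul {S : Set ℝ}
    (hint : IntegrableOn (fun s => exp (k * (x - s)) * f s) S) :
    IntegrableOn (fun s => exp (-k * s) * f s) S := by
  simp_rw [exp_mul_sub_eq k x, mul_assoc] at hint
  exact (integrable_const_mul_iff (exp_pos _).ne'.isUnit _).1 hint

end ExpKernel

section HalfLineIntegral

variable {f : ℝ → ℝ}

lemma hasDerivAt_integral_Iic (hf : Continuous f) (hint : ∀ y, IntegrableOn f (Iic y)) (x : ℝ) :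
    HasDerivAt (fun y => ∫ s in Iic y, f s) (f x) x := by
  have h : (fun y => ∫ s in Iic y, f s) = fun y => (∫ s in Iic x, f s) + ∫ s in x..y, f s := by
    ext y
    rw [← intervalIntegral.integral_Iic_sub_Iic (hint x) (hint y), add_sub_cancel]
  rw [h]
  exact ((hf.integral_hasStrictDerivAt x x).hasDerivAt).const_add _

lemma hasDerivAt_integral_Ici (hf : Continuous f) (hint : ∀ y, IntegrableOn f (Ici y)) (x : ℝ) :
    HasDerivAt (fun y => ∫ s in Ici y, f s) (-f x) x := by
  have h : (fun y => ∫ s in Ici y, f s) = fun y => (∫ s in Ici x, f s) - ∫ s in x..y, f s := by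
    ext y
    rw [← intervalIntegral.integral_Ici_sub_Ici' (hint x) (hint y), sub_sub_cancel]
  rw [h]
  exact ((hf.integral_hasStrictDerivAt x x).hasDerivAt).const_sub _

end HalfLineIntegral

section ExpConvolution

variable {k : ℝ} {f : ℝ → ℝ}

lemma hasDerivAt_integral_Iic_exp_mul_sub_mul (hf : Continuous f)
    (hint : ∀ y, IntegrableOn (fun s => exp (k * (y - s)) * f s) (Iic y)) (x : ℝ) :
    HasDerivAt (fun y => ∫ s in Iic y, exp (k * (y - s)) * f s)
      ((k * ∫ s in Iic x, exp (k * (x - s)) * f s) + f x) x := by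
  simp_rw [integral_exp_mul_sub_mul]
  have hexp : HasDerivAt (fun y => exp (k * y)) (k * exp (k * x)) x := by
    simpa [mul_comm] using ((hasDerivAt_id x).const_mul k).exp
  refine (hexp.mul (hasDerivAt_integral_Iic (by fun_prop)
    (fun y => integrableOn_exp_neg_mul_mul (hint y)) x)).congr_deriv ?_
  have hinv : exp (k * x) * exp (-k * x) = 1 := by rw [← exp_add]; simp
  linear_combination f x * hinv

lemma hasDerivAt_integral_Ici_exp_mul_sub_mul (hf : Continuous f)
    (hint : ∀ y, IntegrableOn (fun s => exp (k * (y - s)) * f s) (Ici y)) (x : ℝ) :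
    HasDerivAt (fun y => ∫ s in Ici y, exp (k * (y - s)) * f s)
      ((k * ∫ s in Ici x, exp (k * (x - s)) * f s) - f x) x := by
  simp_rw [integral_exp_mul_sub_mul]
  have hexp : HasDerivAt (fun y => exp (k * y)) (k * exp (k * x)) x := by
    simpa [mul_comm] using ((hasDerivAt_id x).const_mul k).exp
  refine (hexp.mul (hasDerivAt_integral_Ici (by fun_prop)
    (fun y => integrableOn_exp_neg_mul_mul (hint y)) x)).congr_deriv ?_
  have hinv : exp (k * x) * exp (-k * x) = 1 := by rw [← exp_add]; simp
  linear_combination -f x * hinv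

variable {k₁ k₂ : ℝ}

lemma hasDerivAt_integral_Iic_add_integral_Ici (hf : Continuous f)
    (hint₁ : ∀ y, IntegrableOn (fun s => exp (k₁ * (y - s)) * f s) (Iic y))
    (hint₂ : ∀ y, IntegrableOn (fun s => exp (k₂ * (y - s)) * f s) (Ici y)) (x : ℝ) :
    HasDerivAt
      (fun y => (∫ s in Iic y, exp (k₁ * (y - s)) * f s) + ∫ s in Ici y, exp (k₂ * (y - s)) * f s)
      ((∫ s in Iic x, k₁ * exp (k₁ * (x - s)) * f s) +
        ∫ s in Ici x, k₂ * exp (k₂ * (x - s)) * f s) x := by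
  refine ((hasDerivAt_integral_Iic_exp_mul_sub_mul hf hint₁ x).add
    (hasDerivAt_integral_Ici_exp_mul_sub_mul hf hint₂ x)).congr_deriv ?_
  simp_rw [mul_assoc, integral_const_mul]
  ring

lemma abs_integral_Iic_add_integral_Ici_le {m C : ℝ} (hm : 0 ≤ m) (hk₂ : 0 < k₂)
    (hsum : k₁ + k₂ + 2 * m ≤ 0) (hfC : ∀ s, |f s| ≤ C * exp (-m * s)) (x : ℝ) :
    |(∫ s in Iic x, k₁ * exp (k₁ * (x - s)) * f s) + ∫ s in Ici x, k₂ * exp (k₂ * (x - s)) * f s|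
      ≤ 2 * (C * exp (-m * x)) := by
  have hk₁m : 0 < -(k₁ + m) := by linarith
  have hk₂m : 0 < k₂ + m := by linarith
  have hI : |∫ s in Iic x, exp (k₁ * (x - s)) * f s| ≤ C * exp (-m * x) * (-(k₁ + m))⁻¹ := by
    simpa only [integral_exp_mul_sub_Iic (neg_pos.1 hk₁m)] using
      abs_integral_exp_mul_sub_mul_le hfC (integrableOn_exp_mul_sub_Iic (neg_pos.1 hk₁m) x)
  have hJ : |∫ s in Ici x, exp (k₂ * (x - s)) * f s| ≤ C * exp (-m * x) * (k₂ + m)⁻¹ := by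
    simpa only [integral_exp_mul_sub_Ici hk₂m] using
      abs_integral_exp_mul_sub_mul_le hfC (integrableOn_exp_mul_sub_Ici hk₂m x)
  have hratio : -k₁ * (-(k₁ + m))⁻¹ + k₂ * (k₂ + m)⁻¹ ≤ 2 := by
    rw [← div_eq_mul_inv, ← div_eq_mul_inv, div_add_div _ _ hk₁m.ne' hk₂m.ne',
      div_le_iff₀ (by positivity)]
    nlinarith [mul_nonpos_of_nonneg_of_nonpos hm hsum]
  have hM : 0 ≤ C * exp (-m * x) := (abs_nonneg _).trans (hfC x)
  simp_rw [mul_assoc, integral_const_mul]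
  calc _ ≤ |k₁| * |∫ s in Iic x, exp (k₁ * (x - s)) * f s|
        + |k₂| * |∫ s in Ici x, exp (k₂ * (x - s)) * f s| := by
        rw [← abs_mul, ← abs_mul]; exact abs_add_le _ _
    _ ≤ -k₁ * (C * exp (-m * x) * (-(k₁ + m))⁻¹) + k₂ * (C * exp (-m * x) * (k₂ + m)⁻¹) := by
        rw [abs_of_neg (by linarith), abs_of_pos hk₂]; gcongr; linarith
    _ = (-k₁ * (-(k₁ + m))⁻¹ + k₂ * (k₂ + m)⁻¹) * (C * exp (-m * x)) := by ring
    _ ≤ 2 * (C * exp (-m * x)) := by gcongr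

end ExpConvolution

lemma characteristic_roots_bounds {a c lam lam₁ lam₂ : ℝ} (ha : 0 ≤ a) (hc : 2 * √a ≤ c)
    (hlam : lam = (c - √(c ^ 2 - 4 * a)) / 2) (hlam₁ : lam₁ = (-c - √(c ^ 2 + 4)) / 2)
    (hlam₂ : lam₂ = (-c + √(c ^ 2 + 4)) / 2) :
    0 ≤ lam ∧ 0 < lam₂ ∧ lam₁ + lam₂ + 2 * lam ≤ 0 ∧ 2 * √(1 + a) ≤ lam₂ - lam₁ := by
  have hc0 : 0 ≤ c := (by positivity : (0 : ℝ) ≤ 2 * √a).trans hc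
  have hq : √(c ^ 2 - 4 * a) ≤ c := by
    simpa only [Real.sqrt_sq hc0] using Real.sqrt_le_sqrt (by linarith : c ^ 2 - 4 * a ≤ c ^ 2)
  have hr : c < √(c ^ 2 + 4) := (Real.lt_sqrt hc0).2 (by linarith)
  have hgap : 2 * √(1 + a) ≤ √(c ^ 2 + 4) := by
    rw [Real.le_sqrt (by positivity) (by positivity), mul_pow, Real.sq_sqrt (by linarith)]
    nlinarith [Real.sq_sqrt ha, Real.sqrt_nonneg a]
  subst hlam hlam₁ hlam₂
  refine ⟨by linarith, by linarith, by linarith [Real.sqrt_nonneg (c ^ 2 - 4 * a)], by linarith⟩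

lemma inv_mul_le_div_of_le_two_mul {D r X M : ℝ} (hr : 0 < r) (hD : 2 * r ≤ D) (hX₀ : 0 ≤ X)
    (hX : X ≤ 2 * M) : D⁻¹ * X ≤ M / r := by
  rw [inv_mul_le_iff₀ (by linarith), mul_div_assoc', le_div_iff₀ hr]
  nlinarith

theorem V_deriv_formula_and_bound_general
    (a c : ℝ) (ha : 0 < a) (hc : 2 * Real.sqrt a ≤ c)
    (lam lam₁ lam₂ : ℝ)
    (hlam : lam = (c - Real.sqrt (c ^ 2 - 4 * a)) / 2)
    (hlam₁ : lam₁ = (-c - Real.sqrt (c ^ 2 + 4)) / 2)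
    (hlam₂ : lam₂ = (-c + Real.sqrt (c ^ 2 + 4)) / 2)
    (η : ℝ)
    (u : ℝ → ℝ) (hu : Continuous u)
    (hubd : ∀ x, 0 ≤ u x ∧ u x ≤ min (Real.exp (-lam * x)) η)
    (V : ℝ → ℝ)
    (hV : ∀ x, V x = (lam₂ - lam₁)⁻¹ *
        ((∫ s in Set.Iic x, Real.exp (lam₁ * (x - s)) * u s) +
         (∫ s in Set.Ici x, Real.exp (lam₂ * (x - s)) * u s))) :
    Differentiable ℝ V ∧
    (∀ x, deriv V x = (lam₂ - lam₁)⁻¹ *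
        ((∫ s in Set.Iic x, lam₁ * Real.exp (lam₁ * (x - s)) * u s) +
         (∫ s in Set.Ici x, lam₂ * Real.exp (lam₂ * (x - s)) * u s))) ∧
    (∀ x, |deriv V x| ≤ min (η / Real.sqrt (1 + a))
        (Real.exp (-lam * x) / Real.sqrt (1 + a))) := by
  obtain ⟨hlam0, hlam₂0, hsum, hgap⟩ := characteristic_roots_bounds ha.le hc hlam hlam₁ hlam₂
  have hu_eta : ∀ s, |u s| ≤ η * exp (-0 * s) := fun s => by
    simpa [abs_of_nonneg (hubd s).1] using (hubd s).2.trans (min_le_right _ _)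
  have hu_exp : ∀ s, |u s| ≤ 1 * exp (-lam * s) := fun s => by
    simpa [abs_of_nonneg (hubd s).1] using (hubd s).2.trans (min_le_left _ _)
  have hint₁ : ∀ y, IntegrableOn (fun s => exp (lam₁ * (y - s)) * u s) (Iic y) := fun y =>
    integrable_exp_mul_sub_mul hu.aestronglyMeasurable hu_exp
      (integrableOn_exp_mul_sub_Iic (by linarith) y)
  have hint₂ : ∀ y, IntegrableOn (fun s => exp (lam₂ * (y - s)) * u s) (Ici y) := fun y =>
    integrable_exp_mul_sub_mul hu.aestronglyMeasurable hu_exp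
      (integrableOn_exp_mul_sub_Ici (by linarith) y)
  have hV' : ∀ x, HasDerivAt V ((lam₂ - lam₁)⁻¹ *
      ((∫ s in Iic x, lam₁ * exp (lam₁ * (x - s)) * u s) +
        ∫ s in Ici x, lam₂ * exp (lam₂ * (x - s)) * u s)) x := fun x => by
    rw [show V = _ from funext hV]
    exact (hasDerivAt_integral_Iic_add_integral_Ici hu hint₁ hint₂ x).const_mul _
  have hbound : ∀ m C, 0 ≤ m → lam₁ + lam₂ + 2 * m ≤ 0 → (∀ s, |u s| ≤ C * exp (-m * s)) →
      ∀ x, |deriv V x| ≤ C * exp (-m * x) / √(1 + a) := fun m C hm hmsum hC x => by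
    rw [(hV' x).deriv, abs_mul, abs_inv, abs_of_pos (by linarith [Real.sqrt_nonneg (1 + a)])]
    exact inv_mul_le_div_of_le_two_mul (by positivity) hgap (abs_nonneg _)
      (abs_integral_Iic_add_integral_Ici_le hm hlam₂0 hmsum hC x)
  refine ⟨fun x => (hV' x).differentiableAt, fun x => (hV' x).deriv, fun x => le_min ?_ ?_⟩
  · simpa using hbound 0 η le_rfl (by linarith) hu_eta x
  · simpa using hbound lam 1 hlam0 hsum hu_exp x

/-- derivative formula and bound for the integral
representation `V(·;u)`. -/
theorem V_deriv_formula_and_bound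
    (a c : ℝ) (ha : 0 < a) (hc : 2 * Real.sqrt a ≤ c)
    (lam lam₁ lam₂ : ℝ)
    (hlam : lam = (c - Real.sqrt (c ^ 2 - 4 * a)) / 2)
    (hlam₁ : lam₁ = (-c - Real.sqrt (c ^ 2 + 4)) / 2)
    (hlam₂ : lam₂ = (-c + Real.sqrt (c ^ 2 + 4)) / 2)
    (η : ℝ) (hη : 0 < η)
    (u : ℝ → ℝ) (hu : Continuous u)
    (hubd : ∀ x, 0 ≤ u x ∧ u x ≤ min (Real.exp (-lam * x)) η)
    (V : ℝ → ℝ)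
    (hV : ∀ x, V x = (lam₂ - lam₁)⁻¹ *
        ((∫ s in Set.Iic x, Real.exp (lam₁ * (x - s)) * u s) +
         (∫ s in Set.Ici x, Real.exp (lam₂ * (x - s)) * u s))) :
    Differentiable ℝ V ∧
    (∀ x, deriv V x = (lam₂ - lam₁)⁻¹ *
        ((∫ s in Set.Iic x, lam₁ * Real.exp (lam₁ * (x - s)) * u s) +
         (∫ s in Set.Ici x, lam₂ * Real.exp (lam₂ * (x - s)) * u s))) ∧
    (∀ x, |deriv V x| ≤ min (η / Real.sqrt (1 + a))
        (Real.exp (-lam * x) / Real.sqrt (1 + a))) :=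
  V_deriv_formula_and_bound_general a c ha hc lam lam₁ lam₂ hlam hlam₁ hlam₂ η u hu hubd V hV
end
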